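/- Let S ⊆ ℝ be measurable and let w, x ∈ ℝ^k with α(w,x;S) > 0. Then the variance of z ~ N(⟨w,x⟩,1,S) satisfies E[(z − E[z])²] ≥ α(w,x;S)² / 12. -/

import Mathlib

open MeasureTheory ProbabilityTheory Real
open scoped RealInnerProductSpace ENNReal

/-- The survival probability `α(μ; S) = N(μ,1)(S)`. -/
noncomputable def survival (μ : ℝ) (S : Set ℝ) : ℝ :=
  (gaussianReal μ 1 S).toReal

/-- The truncated Gaussian `N(μ,1,S)`, i.e. `N(μ,1)` conditioned on `S`. -/
noncomputable def truncGaussian (μ : ℝ) (S : Set ℝ) : Measure ℝ :=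
  (gaussianReal μ 1)[|S]

/-! The Gaussian density is at most `1/√(2π)`, so `N(μ,1,S)` has density at most
`c = 1/(√(2π) α)` with respect to Lebesgue measure and gives mass at most `2/3` to any interval
of half-length `t = 1/(3c)`. Around its mean it therefore keeps mass `1/3` at distance `≥ t`,
and Markov's inequality bounds the variance below by `t²/3 = 2πα²/27 ≥ α²/12`. -/

open scoped NNReal

lemma gaussianPDFReal_le_inv_sqrt (μ : ℝ) (v : ℝ≥0) (x : ℝ) :
    gaussianPDFReal μ v x ≤ (√(2 * π * v))⁻¹ := by
  rw [gaussianPDFReal]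
  refine mul_le_of_le_one_right (by positivity) (exp_le_one_iff.mpr ?_)
  exact div_nonpos_of_nonpos_of_nonneg (neg_nonpos.mpr (sq_nonneg _)) (by positivity)

lemma gaussianReal_le_smul_volume (μ : ℝ) {v : ℝ≥0} (hv : v ≠ 0) :
    gaussianReal μ v ≤ ENNReal.ofReal (√(2 * π * v))⁻¹ • volume := by
  rw [gaussianReal_of_var_ne_zero μ hv, ← withDensity_const]
  exact withDensity_mono (ae_of_all _ fun x ↦
    ENNReal.ofReal_le_ofReal (gaussianPDFReal_le_inv_sqrt μ v x))

lemma cond_le_smul {Ω : Type*} [MeasurableSpace Ω] {μ ν : Measure Ω} {c : ℝ≥0∞}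
    (h : μ ≤ c • ν) (s : Set Ω) : μ[|s] ≤ ((μ s)⁻¹ * c) • ν := by
  rw [ProbabilityTheory.cond, mul_smul]
  gcongr
  exact μ.restrict_le_self.trans h

lemma MeasureTheory.Integrable.cond {Ω : Type*} [MeasurableSpace Ω] {μ : Measure Ω} {f : Ω → ℝ}
    (hf : Integrable f μ) {s : Set Ω} (hs : μ s ≠ 0) : Integrable f μ[|s] :=
  hf.restrict.smul_measure (ENNReal.inv_ne_top.mpr hs)

lemma one_div_le_integral_sq_sub_of_le_smul_volume {ν : Measure ℝ} [IsProbabilityMeasure ν]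
    {c : ℝ} (hc : 0 < c) (hν : ν ≤ ENNReal.ofReal c • volume) (m : ℝ)
    (hint : Integrable (fun z ↦ (z - m) ^ 2) ν) :
    1 / (27 * c ^ 2) ≤ ∫ z, (z - m) ^ 2 ∂ν := by
  set t := 1 / (3 * c) with ht_def
  have ht : 0 < t := by positivity
  have hct : 3 * c * t = 1 := by rw [ht_def]; field_simp
  have hnear : ν.real (Set.Ioo (m - t) (m + t)) ≤ 2 / 3 := by
    refine ENNReal.toReal_le_of_le_ofReal (by norm_num) ?_
    calc ν (Set.Ioo (m - t) (m + t)) ≤ ENNReal.ofReal c * volume (Set.Ioo (m - t) (m + t)) :=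
          hν _
      _ = ENNReal.ofReal (2 / 3) := by
          rw [Real.volume_Ioo, ← ENNReal.ofReal_mul hc.le]
          congr 1
          linear_combination (2 / 3) * hct
  have hfar : 1 / 3 ≤ ν.real {z | t ^ 2 ≤ (z - m) ^ 2} := by
    have hsub : (Set.Ioo (m - t) (m + t))ᶜ ⊆ {z | t ^ 2 ≤ (z - m) ^ 2} := by
      intro z hz
      simp only [Set.mem_compl_iff, Set.mem_Ioo, not_and_or, not_lt] at hz
      simp only [Set.mem_ofPred_eq]
      rcases hz with hz | hz <;> nlinarith
    have := measureReal_mono hsub (μ := ν)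
    rw [probReal_compl_eq_one_sub measurableSet_Ioo] at this
    linarith
  calc 1 / (27 * c ^ 2) = t ^ 2 * (1 / 3) := by
        rw [ht_def]; field_simp; ring
    _ ≤ t ^ 2 * ν.real {z | t ^ 2 ≤ (z - m) ^ 2} := by gcongr
    _ ≤ ∫ z, (z - m) ^ 2 ∂ν :=
        mul_meas_ge_le_integral_of_nonneg (ae_of_all _ fun _ ↦ sq_nonneg _) hint _

lemma truncGaussian_le_smul_volume {μ : ℝ} {S : Set ℝ} (h : 0 < survival μ S) :
    truncGaussian μ S ≤ ENNReal.ofReal (√(2 * π) * survival μ S)⁻¹ • volume := by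
  have hS : gaussianReal μ 1 S = ENNReal.ofReal (survival μ S) :=
    (ENNReal.ofReal_toReal (measure_ne_top _ _)).symm
  refine (cond_le_smul (gaussianReal_le_smul_volume μ one_ne_zero) S).trans_eq ?_
  rw [hS, ← ENNReal.ofReal_inv_of_pos h, ← ENNReal.ofReal_mul (by positivity), mul_inv,
    NNReal.coe_one, mul_one, mul_comm]

lemma integrable_sq_sub_truncGaussian {μ : ℝ} {S : Set ℝ} (h : 0 < survival μ S) (m : ℝ) :
    Integrable (fun z ↦ (z - m) ^ 2) (truncGaussian μ S) := by
  refine Integrable.cond ?_ (fun h0 ↦ by simp [survival, h0] at h)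
  exact ((memLp_id_gaussianReal' 2 (by simp)).sub (memLp_const m)).integrable_sq

theorem stmt2 {k : ℕ} (S : Set ℝ)
    (w x : EuclideanSpace ℝ (Fin k)) (h : 0 < survival ⟪w, x⟫ S) :
    survival ⟪w, x⟫ S ^ 2 / 12 ≤
      ∫ z, (z - ∫ z', z' ∂(truncGaussian ⟪w, x⟫ S)) ^ 2 ∂(truncGaussian ⟪w, x⟫ S) := by
  generalize ⟪w, x⟫ = μ at h ⊢
  have : IsProbabilityMeasure (truncGaussian μ S) :=
    cond_isProbabilityMeasure fun h0 ↦ by simp [survival, h0] at h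
  set α := survival μ S
  have hvar := one_div_le_integral_sq_sub_of_le_smul_volume (by positivity)
    (truncGaussian_le_smul_volume h) _
    (integrable_sq_sub_truncGaussian h (∫ z, z ∂(truncGaussian μ S)))
  calc α ^ 2 / 12 ≤ 1 / (27 * ((√(2 * π) * α)⁻¹) ^ 2) := by
        rw [inv_pow, mul_pow, sq_sqrt (by positivity)]
        field_simp
        nlinarith [pi_gt_three, sq_nonneg α]
    _ ≤ _ := hvar
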